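/- Let V_t be the value-iteration iterates (V_0 ≡ 0, V_{t+1}(S) = c(S) + min{(K_0 V_t)(S), (K_1 V_t)(S)}). Then for every t ≥ 0, every battery level e ∈ {1,...,E_max}, every source state X ∈ {0,1}, and all VIA values Δ⁻, Δ⁺ with 1 ≤ Δ⁻ ≤ Δ⁺ ≤ Δ_max, the inequality p_f·[V_t(e−1, X, Δ⁺) − V_t(e−1, X, Δ⁻)] ≤ V_t(e, X, Δ⁺) − V_t(e, X, Δ⁻) holds (the key induction inequality, eq. (13), in the proof of Theorem 1). -/

import Mathlib

open Finset

namespace VIA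

/-- The MDP state space: battery level, source state, VIA value. -/
abbrev State (Emax Dmax : ℕ) := Fin (Emax + 1) × Bool × Fin (Dmax + 1)

/-- Deterministic next state given the action `a`, energy arrival `b`,
source-flip indicator `f`, and channel-success indicator `h`. -/
def nextState (Emax Dmax : ℕ) (s : State Emax Dmax) (a b f h : Bool) :
    State Emax Dmax :=
  let act : Bool := a && decide (0 < s.1.val)
  -- a successful transmission requires transmitting and channel success
  let succ : Bool := act && h
  (⟨min (s.1.val + (if b then 1 else 0) - (if act then 1 else 0)) Emax,
      Nat.lt_succ_of_le (min_le_right _ _)⟩,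
   (if f then !s.2.1 else s.2.1),
   ⟨min (if succ then (if f then 1 else 0)
         else (if f then s.2.2.val + 1 else s.2.2.val)) Dmax,
      Nat.lt_succ_of_le (min_le_right _ _)⟩)

/-- Bernoulli weight: probability `x` for `true`, `1 - x` for `false`. -/
def bern (x : ℝ) : Bool → ℝ := fun b => if b then x else 1 - x

/-- The transition kernel `K_a(s, s')` of the MDP, for action `a`
(`a = true` means transmit).  The source flips with probability `p`
from state `0 = false` and with probability `q` from state `1 = true`;
energy arrives with probability `β`; a transmission succeeds with
probability `ps`. -/
def K (Emax Dmax : ℕ) (p q β ps : ℝ) (a : Bool) (s s' : State Emax Dmax) : ℝ :=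
  ∑ b : Bool, ∑ f : Bool, ∑ h : Bool,
    bern β b * bern (if s.2.1 then q else p) f * bern ps h *
      (if nextState Emax Dmax s a b f h = s' then 1 else 0)

/-- The per-stage cost: the VIA value. -/
def cost (Emax Dmax : ℕ) (s : State Emax Dmax) : ℝ := s.2.2.val

/-- `(K_a V)(s) = ∑_{s'} K_a(s,s') V(s')`. -/
def KV (Emax Dmax : ℕ) (p q β ps : ℝ) (a : Bool) (V : State Emax Dmax → ℝ)
    (s : State Emax Dmax) : ℝ :=
  ∑ s' : State Emax Dmax, K Emax Dmax p q β ps a s s' * V s'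

/-- Value iteration: `V_0 ≡ 0`,
`V_{t+1}(s) = c(s) + min{(K_0 V_t)(s), (K_1 V_t)(s)}`. -/
def Viter (Emax Dmax : ℕ) (p q β ps : ℝ) : ℕ → State Emax Dmax → ℝ
  | 0 => fun _ => 0
  | t + 1 => fun s =>
      cost Emax Dmax s +
        min (KV Emax Dmax p q β ps false (Viter Emax Dmax p q β ps t) s)
            (KV Emax Dmax p q β ps true (Viter Emax Dmax p q β ps t) s)

/-- `ΔV_t(s) = (K_1 V_t)(s) − (K_0 V_t)(s)`. -/
def dV (Emax Dmax : ℕ) (p q β ps : ℝ) (t : ℕ) (s : State Emax Dmax) : ℝ :=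
  KV Emax Dmax p q β ps true (Viter Emax Dmax p q β ps t) s -
    KV Emax Dmax p q β ps false (Viter Emax Dmax p q β ps t) s

/-!
Induction on `t`, carrying along that `V_t` is monotone in the age. Idling moves the battery
levels `e - 1` and `e` to levels that are equal or again adjacent, with the same age update, so
the inequality passes through `K_0`. Transmitting from level `e` either succeeds, and then the
next age no longer depends on the current one, or fails with probability `p_f`, and then it
acts as idling from level `e - 1`; hence the age increment of `K_1 V_t` at `e` is exactly `p_f`
times that of `K_0 V_t` at `e - 1`. The `min` in the Bellman update preserves the inequality
because every one of the four increments involved is squeezed by the same quantity.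
-/

lemma mul_min_sub_min_le {k x a₁ a₂ b₁ b₂ c₁ c₂ d₁ d₂ : ℝ} (hk : 0 ≤ k)
    (ha₁ : k * (a₁ - b₁) ≤ x) (ha₂ : k * (a₂ - b₂) ≤ x)
    (hc₁ : x ≤ c₁ - d₁) (hc₂ : x ≤ c₂ - d₂) :
    k * (min a₁ a₂ - min b₁ b₂) ≤ min c₁ c₂ - min d₁ d₂ := by
  have hlow : k * (min a₁ a₂ - min b₁ b₂) ≤ x := by
    rcases min_choice b₁ b₂ with h | h <;> rw [h]
    · exact (mul_le_mul_of_nonneg_left (by linarith [min_le_left a₁ a₂]) hk).trans ha₁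
    · exact (mul_le_mul_of_nonneg_left (by linarith [min_le_right a₁ a₂]) hk).trans ha₂
  have hhigh : x ≤ min c₁ c₂ - min d₁ d₂ := by
    rcases min_choice c₁ c₂ with h | h <;> rw [h] <;>
      linarith [min_le_left d₁ d₂, min_le_right d₁ d₂]
  exact hlow.trans hhigh

lemma bern_nonneg {x : ℝ} (hx : x ∈ Set.Icc 0 1) (b : Bool) : 0 ≤ bern x b := by
  cases b <;> simp [bern, hx.1, hx.2]

section Kernel

variable {Emax Dmax : ℕ} {p q β ps : ℝ}

def ageIncr (V : State Emax Dmax → ℝ) (e : Fin (Emax + 1)) (X : Bool)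
    (d₁ d₂ : Fin (Dmax + 1)) : ℝ :=
  V (e, X, d₂) - V (e, X, d₁)

def MonotoneInAge (V : State Emax Dmax → ℝ) : Prop :=
  ∀ e X, Monotone fun d => V (e, X, d)

/-- Eq. (13) for `V`, with `e'` playing the role of `e - 1`. -/
def BatteryDominates (ps : ℝ) (V : State Emax Dmax → ℝ) : Prop :=
  ∀ e e' : Fin (Emax + 1), e'.val + 1 = e.val → ∀ X d₁ d₂, d₁ ≤ d₂ →
    (1 - ps) * ageIncr V e' X d₁ d₂ ≤ ageIncr V e X d₁ d₂

def bellman (p q β ps : ℝ) (V : State Emax Dmax → ℝ) (s : State Emax Dmax) : ℝ :=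
  cost Emax Dmax s + min (KV _ _ p q β ps false V s) (KV _ _ p q β ps true V s)

lemma KV_eq_sum (a : Bool) (V : State Emax Dmax → ℝ) (s : State Emax Dmax) :
    KV _ _ p q β ps a V s =
      ∑ b : Bool, ∑ f : Bool, ∑ h : Bool,
        bern β b * bern (if s.2.1 then q else p) f * bern ps h *
          V (nextState Emax Dmax s a b f h) := by
  simp only [KV, K, Finset.sum_mul]
  rw [Finset.sum_comm]
  refine Finset.sum_congr rfl fun b _ => ?_
  rw [Finset.sum_comm]
  refine Finset.sum_congr rfl fun f _ => ?_
  rw [Finset.sum_comm]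
  simp

lemma KV_sub_KV (a : Bool) (V : State Emax Dmax → ℝ) (e e' : Fin (Emax + 1)) (X : Bool)
    (d d' : Fin (Dmax + 1)) :
    KV _ _ p q β ps a V (e, X, d) - KV _ _ p q β ps a V (e', X, d') =
      ∑ b : Bool, ∑ f : Bool, ∑ h : Bool,
        bern β b * bern (if X then q else p) f * bern ps h *
          (V (nextState Emax Dmax (e, X, d) a b f h) -
            V (nextState Emax Dmax (e', X, d') a b f h)) := by
  simp only [KV_eq_sum, ← Finset.sum_sub_distrib, mul_sub]

lemma weight_nonneg (hp : p ∈ Set.Icc 0 1) (hq : q ∈ Set.Icc 0 1) (hβ : β ∈ Set.Icc 0 1)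
    (hps : ps ∈ Set.Icc 0 1) (X b f h : Bool) :
    0 ≤ bern β b * bern (if X then q else p) f * bern ps h := by
  have hflip : (if X then q else p) ∈ Set.Icc 0 1 := by cases X <;> simpa
  have := bern_nonneg hβ b
  have := bern_nonneg hflip f
  have := bern_nonneg hps h
  positivity

lemma nextState_true_of_val_eq_zero {s : State Emax Dmax} (hs : s.1.val = 0) (b f h : Bool) :
    nextState Emax Dmax s true b f h = nextState Emax Dmax s false b f h := by
  simp [nextState, hs]

lemma nextState_false_true (s : State Emax Dmax) (b f : Bool) :
    nextState Emax Dmax s false b f true = nextState Emax Dmax s false b f false := by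
  simp [nextState]

lemma nextState_true_false {e e' : Fin (Emax + 1)} (he : e'.val + 1 = e.val) (X : Bool)
    (d : Fin (Dmax + 1)) (b f : Bool) :
    nextState Emax Dmax (e, X, d) true b f false =
      nextState Emax Dmax (e', X, d) false b f false := by
  simp [nextState, ← he]

lemma nextState_true_true {e : Fin (Emax + 1)} (he : 0 < e.val) (X : Bool)
    (d₁ d₂ : Fin (Dmax + 1)) (b f : Bool) :
    nextState Emax Dmax (e, X, d₁) true b f true =
      nextState Emax Dmax (e, X, d₂) true b f true := by
  simp [nextState, he]

lemma KV_true_eq_KV_false_of_val_eq_zero (V : State Emax Dmax → ℝ) {e : Fin (Emax + 1)}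
    (he : e.val = 0) (X : Bool) (d : Fin (Dmax + 1)) :
    KV _ _ p q β ps true V (e, X, d) = KV _ _ p q β ps false V (e, X, d) := by
  simp only [KV_eq_sum, nextState_true_of_val_eq_zero (s := (e, X, d)) he]

/-- Success makes the next age independent of the current one, failure is idling one level
lower. -/
lemma ageIncr_KV_true (V : State Emax Dmax → ℝ) {e e' : Fin (Emax + 1)}
    (he : e'.val + 1 = e.val) (X : Bool) (d₁ d₂ : Fin (Dmax + 1)) :
    ageIncr (KV _ _ p q β ps true V) e X d₁ d₂ =
      (1 - ps) * ageIncr (KV _ _ p q β ps false V) e' X d₁ d₂ := by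
  simp only [ageIncr, KV_sub_KV, Fintype.sum_bool,
    nextState_true_true (he ▸ Nat.succ_pos _ : 0 < e.val) X d₂ d₁, sub_self,
    nextState_true_false he X, nextState_false_true, bern,
    Bool.false_eq_true, ↓reduceIte]
  ring

lemma MonotoneInAge.KV (hp : p ∈ Set.Icc 0 1) (hq : q ∈ Set.Icc 0 1) (hβ : β ∈ Set.Icc 0 1)
    (hps : ps ∈ Set.Icc 0 1) {V : State Emax Dmax → ℝ} (hV : MonotoneInAge V) (a : Bool) :
    MonotoneInAge (KV _ _ p q β ps a V) := by
  intro e X d₁ d₂ hd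
  rw [← sub_nonneg, KV_sub_KV]
  refine Fintype.sum_nonneg fun b => Fintype.sum_nonneg fun f => Fintype.sum_nonneg fun h =>
    mul_nonneg (weight_nonneg hp hq hβ hps X b f h) (sub_nonneg.2 (hV _ _ ?_))
  simp only [Fin.mk_le_mk]
  split_ifs <;> omega

lemma BatteryDominates.mul_ageIncr_le (hps : 0 ≤ ps) {V : State Emax Dmax → ℝ}
    (hmono : MonotoneInAge V) (hV : BatteryDominates ps V) {e e' : Fin (Emax + 1)}
    (h₁ : e' ≤ e) (h₂ : e.val ≤ e'.val + 1) (X : Bool) {d₁ d₂ : Fin (Dmax + 1)}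
    (hd : d₁ ≤ d₂) : (1 - ps) * ageIncr V e' X d₁ d₂ ≤ ageIncr V e X d₁ d₂ := by
  rcases (show e' = e ∨ e'.val + 1 = e.val by rw [Fin.le_def] at h₁; omega) with rfl | he
  · exact mul_le_of_le_one_left (sub_nonneg.2 (hmono e' X hd)) (by linarith)
  · exact hV e e' he X d₁ d₂ hd

/-- Idling from two adjacent battery levels leads to two equal or adjacent levels. -/
lemma BatteryDominates.KV_false (hp : p ∈ Set.Icc 0 1) (hq : q ∈ Set.Icc 0 1)
    (hβ : β ∈ Set.Icc 0 1) (hps : ps ∈ Set.Icc 0 1) {V : State Emax Dmax → ℝ}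
    (hmono : MonotoneInAge V) (hV : BatteryDominates ps V) :
    BatteryDominates ps (KV _ _ p q β ps false V) := by
  intro e e' he X d₁ d₂ hd
  simp only [ageIncr, KV_sub_KV, Finset.mul_sum]
  refine Finset.sum_le_sum fun b _ => Finset.sum_le_sum fun f _ =>
    Finset.sum_le_sum fun h _ => ?_
  rw [mul_left_comm]
  refine mul_le_mul_of_nonneg_left ?_ (weight_nonneg hp hq hβ hps X b f h)
  simp only [nextState, Bool.false_and, Bool.false_eq_true, ↓reduceIte]
  refine hV.mul_ageIncr_le hps.1 hmono ?_ ?_ _ ?_ <;> simp only [Fin.mk_le_mk] <;>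
    split_ifs <;> omega

lemma ageIncr_KV_true_le (hp : p ∈ Set.Icc 0 1) (hq : q ∈ Set.Icc 0 1)
    (hβ : β ∈ Set.Icc 0 1) (hps : ps ∈ Set.Icc 0 1) {V : State Emax Dmax → ℝ}
    (hmono : MonotoneInAge V) (hV : BatteryDominates ps V) (e : Fin (Emax + 1)) (X : Bool)
    {d₁ d₂ : Fin (Dmax + 1)} (hd : d₁ ≤ d₂) :
    ageIncr (KV _ _ p q β ps true V) e X d₁ d₂ ≤
      ageIncr (KV _ _ p q β ps false V) e X d₁ d₂ := by
  obtain ⟨_ | k, hk⟩ := e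
  · simp only [ageIncr, KV_true_eq_KV_false_of_val_eq_zero V (e := ⟨0, hk⟩) rfl, le_refl]
  · rw [ageIncr_KV_true V (e' := ⟨k, by omega⟩) rfl]
    exact hV.KV_false hp hq hβ hps hmono _ _ rfl X d₁ d₂ hd

lemma MonotoneInAge.bellman (hp : p ∈ Set.Icc 0 1) (hq : q ∈ Set.Icc 0 1)
    (hβ : β ∈ Set.Icc 0 1) (hps : ps ∈ Set.Icc 0 1) {V : State Emax Dmax → ℝ}
    (hV : MonotoneInAge V) : MonotoneInAge (bellman p q β ps V) := fun e X _ _ hd =>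
  add_le_add (by simpa [cost] using hd)
    (min_le_min (MonotoneInAge.KV hp hq hβ hps hV false e X hd)
      (MonotoneInAge.KV hp hq hβ hps hV true e X hd))

lemma BatteryDominates.bellman (hp : p ∈ Set.Icc 0 1) (hq : q ∈ Set.Icc 0 1)
    (hβ : β ∈ Set.Icc 0 1) (hps : ps ∈ Set.Icc 0 1) {V : State Emax Dmax → ℝ}
    (hmono : MonotoneInAge V) (hV : BatteryDominates ps V) :
    BatteryDominates ps (bellman p q β ps V) := by
  intro e e' he X d₁ d₂ hd
  have hk : 0 ≤ 1 - ps := sub_nonneg.2 hps.2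
  have hidle := hV.KV_false hp hq hβ hps hmono e e' he X d₁ d₂ hd
  have htransmit : ageIncr (KV _ _ p q β ps true V) e X d₁ d₂ = _ :=
    ageIncr_KV_true V he X d₁ d₂
  have htransmit' := mul_le_mul_of_nonneg_left
    (ageIncr_KV_true_le hp hq hβ hps hmono hV e' X hd) hk
  have hmin := mul_min_sub_min_le hk le_rfl htransmit' hidle htransmit.ge
  have hcost : (1 - ps) * ((d₂ : ℝ) - d₁) ≤ (d₂ : ℝ) - d₁ :=
    mul_le_of_le_one_left (sub_nonneg.2 (by exact_mod_cast hd)) (by linarith [hps.1])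
  simp only [ageIncr, VIA.bellman, cost] at hmin ⊢
  linarith

end Kernel

theorem Viter_monotoneInAge {Emax Dmax : ℕ} {p q β ps : ℝ} (hp : p ∈ Set.Icc 0 1)
    (hq : q ∈ Set.Icc 0 1) (hβ : β ∈ Set.Icc 0 1) (hps : ps ∈ Set.Icc 0 1) :
    ∀ t, MonotoneInAge (Viter Emax Dmax p q β ps t)
  | 0 => fun _ _ _ _ _ => le_rfl
  | t + 1 => (Viter_monotoneInAge hp hq hβ hps t).bellman hp hq hβ hps

theorem Viter_batteryDominates {Emax Dmax : ℕ} {p q β ps : ℝ} (hp : p ∈ Set.Icc 0 1)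
    (hq : q ∈ Set.Icc 0 1) (hβ : β ∈ Set.Icc 0 1) (hps : ps ∈ Set.Icc 0 1) :
    ∀ t, BatteryDominates ps (Viter Emax Dmax p q β ps t)
  | 0 => fun _ _ _ _ _ _ _ => by simp [ageIncr, Viter]
  | t + 1 => (Viter_batteryDominates hp hq hβ hps t).bellman hp hq hβ hps
      (Viter_monotoneInAge hp hq hβ hps t)

/-- **Key induction inequality (eq. (13) in the proof of Theorem 1).**
For every value-iteration step `t`, battery level `1 ≤ e ≤ E_max`,
source state `X`, and VIA values `1 ≤ Δ⁻ ≤ Δ⁺ ≤ Δ_max`: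
`p_f [V_t(e−1,X,Δ⁺) − V_t(e−1,X,Δ⁻)] ≤ V_t(e,X,Δ⁺) − V_t(e,X,Δ⁻)`,
where `p_f = 1 − p_s`. -/
theorem value_iteration_key_inequality (Emax Dmax : ℕ)
    (p q β ps : ℝ) (hp0 : 0 ≤ p) (hp1 : p ≤ 1) (hq0 : 0 ≤ q) (hq1 : q ≤ 1)
    (hβ0 : 0 ≤ β) (hβ1 : β ≤ 1) (hps0 : 0 ≤ ps) (hps1 : ps ≤ 1)
    (t : ℕ) (e : ℕ) (he1 : 1 ≤ e) (he2 : e ≤ Emax) (X : Bool)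
    (dm dp : ℕ) (hdmdp : dm ≤ dp) (hdp : dp ≤ Dmax) :
    (1 - ps) *
        (Viter Emax Dmax p q β ps t (⟨e - 1, by omega⟩, X, ⟨dp, by omega⟩) -
          Viter Emax Dmax p q β ps t (⟨e - 1, by omega⟩, X, ⟨dm, by omega⟩)) ≤
      Viter Emax Dmax p q β ps t (⟨e, by omega⟩, X, ⟨dp, by omega⟩) -
        Viter Emax Dmax p q β ps t (⟨e, by omega⟩, X, ⟨dm, by omega⟩) :=
  Viter_batteryDominates ⟨hp0, hp1⟩ ⟨hq0, hq1⟩ ⟨hβ0, hβ1⟩ ⟨hps0, hps1⟩ t _ _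
    (Nat.sub_add_cancel he1) X _ _ (Fin.mk_le_mk.2 hdmdp)

end VIA
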